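/- arXiv:1107.5552 — 4 statements merged into one kernel-verified Lean document; each statement's English description precedes it below -/
import Mathlib

section
/- If G is a simple acyclic mixed graph, then G is HTC-identifiable. -/
open scoped Classical Matrix

/-- A mixed graph `G = (V, D, B)`: a finite vertex set `V`, a set `D` of directed
edges, and a symmetric set `B` of bidirected edges; no self-loops. -/
structure MixedGraph (V : Type*) [Fintype V] [DecidableEq V] where
  D : Finset (V × V)
  B : Finset (V × V)
  B_symm : ∀ v w : V, (v, w) ∈ B → (w, v) ∈ B
  D_irrefl : ∀ v : V, (v, v) ∉ D
  B_irrefl : ∀ v : V, (v, v) ∉ B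

namespace MixedGraph

variable {V : Type*} [Fintype V] [DecidableEq V]

/-- The parents of `v`: nodes `w` with `w → v ∈ D`. -/
def pa (G : MixedGraph V) (v : V) : Finset V :=
  Finset.univ.filter fun w => (w, v) ∈ G.D

/-- The siblings of `v`: nodes `w` with `w ↔ v ∈ B`. -/
def sib (G : MixedGraph V) (v : V) : Finset V :=
  Finset.univ.filter fun w => (w, v) ∈ G.B

/-- A trek: a walk with no colliding arrowheads.  The field `left` lists the nodes of the
left-hand side from top (head) to source (last); `right` lists the nodes of the right-hand
side from top (head) to target (last); consecutive nodes in each list are joined by directed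
edges pointing away from the head.  If `hasBidir` then the two heads are joined by a
bidirected edge, otherwise they coincide (the top node). -/
structure Trek (G : MixedGraph V) where
  left : List V
  right : List V
  left_ne : left ≠ []
  right_ne : right ≠ []
  hasBidir : Bool
  left_chain : left.Chain' fun a b => (a, b) ∈ G.D
  right_chain : right.Chain' fun a b => (a, b) ∈ G.D
  head_cond : if hasBidir then (left.head left_ne, right.head right_ne) ∈ G.B
              else left.head left_ne = right.head right_ne

namespace Trek

variable {G : MixedGraph V}

/-- The source of a trek. -/
def source (π : G.Trek) : V := π.left.getLast π.left_ne

/-- The target of a trek. -/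
def target (π : G.Trek) : V := π.right.getLast π.right_ne

/-- The left-hand side `Left(π)` of a trek, as a set of nodes. -/
def leftSet (π : G.Trek) : Finset V := π.left.toFinset

/-- The right-hand side `Right(π)` of a trek, as a set of nodes. -/
def rightSet (π : G.Trek) : Finset V := π.right.toFinset

/-- A half-trek is a trek whose left-hand side consists of exactly one node. -/
def IsHalfTrek (π : G.Trek) : Prop := π.leftSet.card = 1

/-- The number of directed edges traversed by the trek. -/
def nEdges (π : G.Trek) : ℕ := (π.left.length - 1) + (π.right.length - 1)

end Trek

/-- `htr v`: the set of nodes `w ∉ {v} ∪ sib(v)` reachable from `v` by a half-trek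
containing at least one directed edge. -/
def htr (G : MixedGraph V) (v : V) : Set V :=
  {w | w ≠ v ∧ w ∉ G.sib v ∧
    ∃ π : G.Trek, π.source = v ∧ π.target = w ∧ π.IsHalfTrek ∧ 1 ≤ π.nEdges}

/-- `f` encodes a system of treks from `Y` to `P`: treks with pairwise distinct sources
forming `Y` and pairwise distinct targets forming `P`. -/
def IsTrekSystem (G : MixedGraph V) (Y P : Finset V) (f : V → G.Trek) : Prop :=
  (∀ y ∈ Y, (f y).source = y) ∧
  (Y.image fun y => (f y).target) = P ∧
  ∀ y ∈ Y, ∀ y' ∈ Y, y ≠ y' → (f y).target ≠ (f y').target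

/-- The treks `f y`, `y ∈ Y`, have no sided intersection. -/
def NoSidedIntersection (G : MixedGraph V) (Y : Finset V) (f : V → G.Trek) : Prop :=
  ∀ y ∈ Y, ∀ y' ∈ Y, y ≠ y' →
    Disjoint (f y).leftSet (f y').leftSet ∧ Disjoint (f y).rightSet (f y').rightSet

/-- `Y` satisfies the half-trek criterion with respect to `v`. -/
def SatisfiesHTC (G : MixedGraph V) (v : V) (Y : Finset V) : Prop :=
  Y.card = (G.pa v).card ∧
  (∀ y ∈ Y, y ≠ v ∧ y ∉ G.sib v) ∧
  ∃ f : V → G.Trek, (∀ y ∈ Y, (f y).IsHalfTrek) ∧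
    G.IsTrekSystem Y (G.pa v) f ∧ G.NoSidedIntersection Y f

/-- `Y` satisfies the weak half-trek criterion with respect to `v`. -/
def SatisfiesWeakHTC (G : MixedGraph V) (v : V) (Y : Finset V) : Prop :=
  Y.card = (G.pa v).card ∧
  (∀ y ∈ Y, y ≠ v ∧ y ∉ G.sib v) ∧
  ∃ f : V → G.Trek, (∀ y ∈ Y, y ∈ G.htr v → (f y).IsHalfTrek) ∧
    G.IsTrekSystem Y (G.pa v) f ∧ G.NoSidedIntersection Y f

/-- `G` is HTC-identifiable. -/
def HTCIdentifiable (G : MixedGraph V) : Prop :=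
  ∃ Y : V → Finset V,
    (∀ v, G.SatisfiesHTC v (Y v)) ∧
    ∃ r : V → V → Prop, IsStrictTotalOrder V r ∧
      ∀ v w, w ∈ Y v → w ∈ G.htr v → r w v

/-- `G` is HTC-infinite-to-one. -/
def HTCInfiniteToOne (G : MixedGraph V) : Prop :=
  ∀ Y : V → Finset V,
    (∃ v, ¬ G.SatisfiesHTC v (Y v)) ∨ ∃ v w, v ∈ Y w ∧ w ∈ Y v

/-- `G` is acyclic: no directed cycle can be formed from the edges in `D`. -/
def Acyclic (G : MixedGraph V) : Prop :=
  ∀ v : V, ¬ Relation.TransGen (fun a b => (a, b) ∈ G.D) v v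

/-- `G` is simple: at most one edge between any pair of nodes. -/
def Simple (G : MixedGraph V) : Prop :=
  (∀ e ∈ G.D, e ∉ G.B) ∧ ∀ v w : V, (v, w) ∈ G.D → (w, v) ∉ G.D

/-- `ℝ^D_reg`: real matrices supported on `D` with `I - Λ` invertible. -/
def RDreg (G : MixedGraph V) : Set (Matrix V V ℝ) :=
  {Λ | (∀ v w, (v, w) ∉ G.D → Λ v w = 0) ∧ IsUnit (1 - Λ).det}

/-- `PD(B)`: positive definite symmetric matrices supported on the diagonal and `B`. -/
def PDB (G : MixedGraph V) : Set (Matrix V V ℝ) :=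
  {Ω | Ω.PosDef ∧ ∀ v w, v ≠ w → (v, w) ∉ G.B → Ω v w = 0}

/-- The parameter space `Θ = ℝ^D_reg × PD(B)`. -/
def Theta (G : MixedGraph V) : Set (Matrix V V ℝ × Matrix V V ℝ) :=
  {θ | θ.1 ∈ G.RDreg ∧ θ.2 ∈ G.PDB}

/-- The parametrization `φ(Λ, Ω) = (I-Λ)^{-T} Ω (I-Λ)^{-1}`. -/
noncomputable def phi {R : Type*} [CommRing R] (Λ Ω : Matrix V V R) : Matrix V V R :=
  ((1 - Λ)⁻¹)ᵀ * Ω * (1 - Λ)⁻¹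

/-- Evaluation of a polynomial in the coordinates `λ_vw` (left summand) and `ω_vw`
(right summand) at a parameter point `θ = (Λ, Ω)`. -/
noncomputable def evalParam (θ : Matrix V V ℝ × Matrix V V ℝ)
    (p : MvPolynomial ((V × V) ⊕ (V × V)) ℝ) : ℝ :=
  MvPolynomial.eval (Sum.elim (fun e => θ.1 e.1 e.2) (fun e => θ.2 e.1 e.2)) p

/-- `V₀` is a proper algebraic subset of `Θ`: the intersection with `Θ` of the zero set of a
polynomial in the coordinates that does not vanish identically on `Θ`. -/
def IsProperAlgebraic (G : MixedGraph V)
    (V₀ : Set (Matrix V V ℝ × Matrix V V ℝ)) : Prop :=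
  ∃ p : MvPolynomial ((V × V) ⊕ (V × V)) ℝ,
    (∃ θ ∈ G.Theta, evalParam θ p ≠ 0) ∧
    V₀ = {θ ∈ G.Theta | evalParam θ p = 0}

/-- Evaluation of a polynomial in the entries of a covariance matrix. -/
noncomputable def evalAtCov (S : Matrix V V ℝ) (p : MvPolynomial (V × V) ℝ) : ℝ :=
  MvPolynomial.eval (fun e => S e.1 e.2) p

/-- `G` is rationally identifiable: some rational map `ψ` (each coordinate a quotient of
polynomials in the entries of the covariance matrix) satisfies `ψ ∘ φ_G = id` off a proper
algebraic subset of `Θ`. -/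
def RationallyIdentifiable (G : MixedGraph V) : Prop :=
  ∃ V₀, G.IsProperAlgebraic V₀ ∧
    ∃ p q : ((V × V) ⊕ (V × V)) → MvPolynomial (V × V) ℝ,
      ∀ θ ∈ G.Theta \ V₀,
        (∀ i, evalAtCov (phi θ.1 θ.2) (q i) ≠ 0) ∧
        (∀ v w : V, θ.1 v w * evalAtCov (phi θ.1 θ.2) (q (Sum.inl (v, w)))
            = evalAtCov (phi θ.1 θ.2) (p (Sum.inl (v, w)))) ∧
        (∀ v w : V, θ.2 v w * evalAtCov (phi θ.1 θ.2) (q (Sum.inr (v, w)))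
            = evalAtCov (phi θ.1 θ.2) (p (Sum.inr (v, w))))

/-- `G` is generically identifiable: `φ_G` is injective off a proper algebraic subset. -/
def GenericallyIdentifiable (G : MixedGraph V) : Prop :=
  ∃ V₀, G.IsProperAlgebraic V₀ ∧
    Set.InjOn (fun θ : Matrix V V ℝ × Matrix V V ℝ => phi θ.1 θ.2) (G.Theta \ V₀)

/-- `φ_G` is generically infinite-to-one. -/
def GenInfiniteToOne (G : MixedGraph V) : Prop :=
  ∃ V₀, G.IsProperAlgebraic V₀ ∧
    ∀ θ ∈ G.Theta \ V₀,
      {θ' ∈ G.Theta | phi θ'.1 θ'.2 = phi θ.1 θ.2}.Infinite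

end MixedGraph

/-! Take `Y_v = pa(v)`, each parent reaching itself by the trek without edges. Simplicity keeps
parents out of `sib(v)`, and a linear extension of the strict ancestor order of the acyclic graph
puts every parent before its child. -/

theorem extend_strictOrder {α : Type*} (r : α → α → Prop) [IsStrictOrder α r] :
    ∃ s : α → α → Prop, IsStrictTotalOrder α s ∧ r ≤ s := by
  let := partialOrderOfSO r
  have hinj : Function.Injective (toLinearExtension : α → LinearExtension α) := fun _ _ h => h
  exact ⟨Function.onFun (· < ·) toLinearExtension,
    hinj.isStrictTotalOrder_onFun (r := (· < ·)),
    fun a b hab => toLinearExtension.monotone.strictMono_of_injective hinj (show a < b from hab)⟩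

namespace MixedGraph

variable {V : Type*} [Fintype V] [DecidableEq V] {G : MixedGraph V}

theorem Acyclic.isStrictOrder (hG : G.Acyclic) :
    IsStrictOrder V (Relation.TransGen fun a b => (a, b) ∈ G.D) where
  irrefl := hG
  trans _ _ _ := Relation.TransGen.trans

theorem mem_pa {v w : V} : w ∈ G.pa v ↔ (w, v) ∈ G.D := by simp [pa]

theorem mem_sib {v w : V} : w ∈ G.sib v ↔ (w, v) ∈ G.B := by simp [sib]

namespace Trek

def single (G : MixedGraph V) (y : V) : G.Trek where
  left := [y]
  right := [y]
  left_ne := List.cons_ne_nil y []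
  right_ne := List.cons_ne_nil y []
  hasBidir := false
  left_chain := List.isChain_singleton _
  right_chain := List.isChain_singleton _
  head_cond := rfl

@[simp] theorem target_single (y : V) : (single G y).target = y := rfl

@[simp] theorem leftSet_single (y : V) : (single G y).leftSet = {y} := rfl

@[simp] theorem rightSet_single (y : V) : (single G y).rightSet = {y} := rfl

theorem isHalfTrek_single (y : V) : (single G y).IsHalfTrek := by
  simp [IsHalfTrek]

end Trek

theorem isTrekSystem_single (Y : Finset V) : G.IsTrekSystem Y Y (Trek.single G) :=
  ⟨fun _ _ => rfl, by simp, fun _ _ _ _ hne => hne⟩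

theorem noSidedIntersection_single (Y : Finset V) : G.NoSidedIntersection Y (Trek.single G) :=
  fun _ _ _ _ hne => by simp [hne]

theorem satisfiesHTC_pa (hDB : ∀ e ∈ G.D, e ∉ G.B) (v : V) : G.SatisfiesHTC v (G.pa v) := by
  refine ⟨rfl, fun y hy => ?_, Trek.single G, fun y _ => Trek.isHalfTrek_single y,
    isTrekSystem_single _, noSidedIntersection_single _⟩
  rw [mem_pa] at hy
  exact ⟨fun hyv => G.D_irrefl v (hyv ▸ hy), fun hsib => hDB _ hy (mem_sib.mp hsib)⟩

end MixedGraph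

/-- If `G` is a simple acyclic mixed graph, then `G` is HTC-identifiable. -/
theorem simple_acyclic_htc_identifiable {V : Type*} [Fintype V] [DecidableEq V]
    (G : MixedGraph V) (hsimple : G.Simple) (hacyclic : G.Acyclic) :
    G.HTCIdentifiable := by
  have := hacyclic.isStrictOrder
  obtain ⟨r, hr, hDr⟩ := extend_strictOrder (Relation.TransGen fun a b => (a, b) ∈ G.D)
  exact ⟨G.pa, G.satisfiesHTC_pa hsimple.1, r, hr,
    fun v w hw _ => hDr _ _ (.single (G.mem_pa.mp hw))⟩
end

section
/- If a mixed graph G=(V,D,B) on m nodes has |D| + |B| > C(m,2) = m(m−1)/2 edges, where |D| is the number of directed edges and |B| is the number of bidirected edges (counted as unordered pairs), then G is HTC-infinite-to-one. -/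
open scoped Classical Matrix

/-- If a mixed graph on `m` nodes has `|D| + |B| > m(m-1)/2` edges (with bidirected edges
counted as unordered pairs, so that `G.B.card` counts each bidirected edge twice), then `G`
is HTC-infinite-to-one. -/
theorem too_many_edges_htc_infinite_to_one {V : Type*} [Fintype V] [DecidableEq V]
    (G : MixedGraph V)
    (h : Fintype.card V * (Fintype.card V - 1) < 2 * G.D.card + G.B.card) :
    G.HTCInfiniteToOne := by
  classical
  intro Y
  by_contra hcon
  push_neg at hcon
  obtain ⟨h1, h2⟩ := hcon
  have hYcard : ∀ v, (Y v).card = (G.pa v).card := fun v => (h1 v).1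
  have hYne : ∀ v, ∀ y ∈ Y v, y ≠ v ∧ y ∉ G.sib v := fun v => (h1 v).2.1
  -- count directed edges fiberwise by their head
  have hD : G.D.card = ∑ v : V, (G.pa v).card := by
    rw [Finset.card_eq_sum_card_fiberwise
      (f := Prod.snd) (t := Finset.univ) (fun e _ => Finset.mem_univ _)]
    refine Finset.sum_congr rfl fun v _ => ?_
    refine Finset.card_bij (fun e _ => e.1) ?_ ?_ ?_
    · intro e he
      simp only [Finset.mem_filter] at he
      simp [MixedGraph.pa, ← he.2, he.1]
    · intro e he e' he' hee
      simp only [Finset.mem_filter] at he he'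
      exact Prod.ext hee (he.2.trans he'.2.symm)
    · intro w hw
      simp only [MixedGraph.pa, Finset.mem_filter, Finset.mem_univ, true_and] at hw
      exact ⟨(w, v), by simp [hw], rfl⟩
  -- the indicator function
  set g : V → V → ℕ := fun v w =>
    (if w ∈ Y v then 1 else 0) + (if v ∈ Y w then 1 else 0) +
      (if (v, w) ∈ G.B then 1 else 0) with hg
  have key : 2 * G.D.card + G.B.card ≤ Fintype.card V * (Fintype.card V - 1) := by
    have hzero : ∀ v : V, g v v = 0 := by
      intro v
      have h1' : v ∉ Y v := fun hv => (hYne v v hv).1 rfl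
      simp [hg, h1', G.B_irrefl v]
    have hle : ∀ v w : V, g v w ≤ 1 := by
      intro v w
      simp only [hg]
      by_cases hw : w ∈ Y v
      · have hvw : v ∉ Y w := h2 w v hw
        have hB : (v, w) ∉ G.B := by
          intro hb
          exact (hYne v w hw).2 (by simp [MixedGraph.sib, G.B_symm v w hb])
        simp [hw, hvw, hB]
      · by_cases hv : v ∈ Y w
        · have hB : (v, w) ∉ G.B := by
            intro hb
            exact (hYne w v hv).2 (by simp [MixedGraph.sib, hb])
          simp [hw, hv, hB]
        · simp [hw, hv]
          split <;> simp
    have hrow : ∀ v : V, ∑ w : V, g v w ≤ Fintype.card V - 1 := by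
      intro v
      have heq : ∑ w : V, g v w = ∑ w ∈ Finset.univ.erase v, g v w := by
        refine (Finset.sum_subset (Finset.subset_univ _) ?_).symm
        intro x _ hx
        have : x = v := by
          by_contra hne
          exact hx (Finset.mem_erase.mpr ⟨hne, Finset.mem_univ x⟩)
        rw [this, hzero]
      rw [heq]
      calc ∑ w ∈ Finset.univ.erase v, g v w
          ≤ ∑ _w ∈ Finset.univ.erase v, 1 :=
            Finset.sum_le_sum fun w _ => hle v w
        _ = (Finset.univ.erase v).card := by simp
        _ = Fintype.card V - 1 := by
            rw [Finset.card_erase_of_mem (Finset.mem_univ v), Finset.card_univ]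
    have htot : ∑ v : V, ∑ w : V, g v w ≤ Fintype.card V * (Fintype.card V - 1) := by
      calc ∑ v : V, ∑ w : V, g v w ≤ ∑ _v : V, (Fintype.card V - 1) :=
            Finset.sum_le_sum fun v _ => hrow v
        _ = Fintype.card V * (Fintype.card V - 1) := by
            rw [Finset.sum_const, Finset.card_univ, smul_eq_mul]
    have hsplit : ∑ v : V, ∑ w : V, g v w = 2 * G.D.card + G.B.card := by
      have e1 : ∀ v : V, ∑ w : V, (if w ∈ Y v then (1:ℕ) else 0) = (Y v).card := by
        intro v
        rw [Finset.sum_ite_mem]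
        simp
      have e2 : ∑ v : V, ∑ w : V, (if v ∈ Y w then (1:ℕ) else 0) = ∑ v : V, (Y v).card := by
        rw [Finset.sum_comm]
        exact Finset.sum_congr rfl fun w _ => e1 w
      have e3 : ∑ v : V, ∑ w : V, (if (v, w) ∈ G.B then (1:ℕ) else 0) = G.B.card := by
        rw [← Fintype.sum_prod_type' (f := fun v w => if (v, w) ∈ G.B then (1:ℕ) else 0)]
        rw [show (fun x : V × V => if (x.1, x.2) ∈ G.B then (1:ℕ) else 0)
            = fun x : V × V => if x ∈ G.B then (1:ℕ) else 0 from funext fun x => by simp]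
        rw [Finset.sum_ite_mem]
        simp
      have hYD : ∑ v : V, (Y v).card = G.D.card := by
        rw [hD]; exact Finset.sum_congr rfl fun v _ => hYcard v
      calc ∑ v : V, ∑ w : V, g v w
          = (∑ v : V, ∑ w : V, (if w ∈ Y v then (1:ℕ) else 0))
            + (∑ v : V, ∑ w : V, (if v ∈ Y w then (1:ℕ) else 0))
            + (∑ v : V, ∑ w : V, (if (v, w) ∈ G.B then (1:ℕ) else 0)) := by
            simp only [hg, Finset.sum_add_distrib]
        _ = G.D.card + G.D.card + G.B.card := by
            rw [e2, e3, hYD]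
            congr 1
            congr 1
            rw [← hYD]
            exact Finset.sum_congr rfl fun v _ => e1 v
        _ = 2 * G.D.card + G.B.card := by ring
    rw [← hsplit]
    exact htot
  omega
end

section
/- Let G=(V,D,B) be a mixed graph and v∈V. If a set W⊆V satisfies the weak half-trek criterion with respect to v, then there exists a set Y⊆V satisfying the half-trek criterion with respect to v such that Y∩htr(v) = W∩htr(v). -/
open scoped Classical Matrix

/-!
Replace each trek of a weak half-trek system by the half-trek that starts at the head of its
left side and keeps its right side; these heads are distinct because the left sides are disjoint.
A trek from a node of `htr v` is already a half-trek, so it is unchanged. For a trek from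
`w ∉ htr v`, the head of its left side is neither `v`, nor a sibling of `v`, nor in `htr v`:
otherwise a half-trek from `v` to that head, continued down the left side, would reach `w`.
Hence the new sources avoid `{v} ∪ sib v` and meet `htr v` exactly where the old ones did.
-/

namespace MixedGraph

variable {V : Type*} [Fintype V] [DecidableEq V] {G : MixedGraph V}

namespace Trek

/-- The head `v^L_0` (or `v^T`) of the left side of a trek. -/
def leftTop (π : G.Trek) : V := π.left.head π.left_ne

lemma leftTop_mem_leftSet (π : G.Trek) : π.leftTop ∈ π.leftSet :=
  List.mem_toFinset.mpr (List.head_mem _)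

lemma source_mem_leftSet (π : G.Trek) : π.source ∈ π.leftSet :=
  List.mem_toFinset.mpr (List.getLast_mem _)

lemma IsHalfTrek.leftTop_eq_source {π : G.Trek} (h : π.IsHalfTrek) :
    π.leftTop = π.source := by
  obtain ⟨x, hx⟩ := Finset.card_eq_one.mp h
  have htop := π.leftTop_mem_leftSet
  have hsrc := π.source_mem_leftSet
  rw [hx, Finset.mem_singleton] at htop hsrc
  rw [htop, hsrc]

lemma one_le_length_left_tail {π : G.Trek} (h : π.leftTop ≠ π.source) :
    1 ≤ π.left.tail.length := by
  rw [Nat.one_le_iff_ne_zero, Ne, List.length_eq_zero_iff]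
  intro htail
  obtain ⟨a, ha⟩ : ∃ a, π.left = [a] :=
    ⟨π.leftTop, by rw [← List.cons_head_tail π.left_ne, htail]; rfl⟩
  exact h (by simp [leftTop, source, ha])

def toHalfTrek (π : G.Trek) : G.Trek where
  left := [π.leftTop]
  right := π.right
  left_ne := List.cons_ne_nil _ _
  right_ne := π.right_ne
  hasBidir := π.hasBidir
  left_chain := List.isChain_singleton _
  right_chain := π.right_chain
  head_cond := π.head_cond

@[simp] lemma toHalfTrek_source (π : G.Trek) : π.toHalfTrek.source = π.leftTop := rfl

@[simp] lemma toHalfTrek_target (π : G.Trek) : π.toHalfTrek.target = π.target := rfl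

@[simp] lemma toHalfTrek_leftSet (π : G.Trek) : π.toHalfTrek.leftSet = {π.leftTop} := rfl

@[simp] lemma toHalfTrek_rightSet (π : G.Trek) : π.toHalfTrek.rightSet = π.rightSet := rfl

lemma toHalfTrek_isHalfTrek (π : G.Trek) : π.toHalfTrek.IsHalfTrek := rfl

def refl (v : V) : G.Trek where
  left := [v]
  right := [v]
  left_ne := List.cons_ne_nil _ _
  right_ne := List.cons_ne_nil _ _
  hasBidir := false
  left_chain := List.isChain_singleton _
  right_chain := List.isChain_singleton _
  head_cond := rfl

def ofSib {v w : V} (h : (v, w) ∈ G.B) : G.Trek where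
  left := [v]
  right := [w]
  left_ne := List.cons_ne_nil _ _
  right_ne := List.cons_ne_nil _ _
  hasBidir := true
  left_chain := List.isChain_singleton _
  right_chain := List.isChain_singleton _
  head_cond := h

def append (σ : G.Trek) (l : List V) (hl : (σ.target :: l).IsChain fun a b => (a, b) ∈ G.D) :
    G.Trek where
  left := σ.left
  right := σ.right ++ l
  left_ne := σ.left_ne
  right_ne := by simp [σ.right_ne]
  hasBidir := σ.hasBidir
  left_chain := σ.left_chain
  right_chain := by
    refine σ.right_chain.append hl.tail ?_
    rw [List.getLast?_eq_some_getLast σ.right_ne]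
    rintro _ ⟨⟩
    exact List.isChain_cons.mp hl |>.1
  head_cond := by simpa [List.head_append_of_ne_nil σ.right_ne] using σ.head_cond

section append

variable (σ : G.Trek) (l : List V) (hl : (σ.target :: l).IsChain fun a b => (a, b) ∈ G.D)

@[simp] lemma append_source : (σ.append l hl).source = σ.source := rfl

lemma append_target :
    (σ.append l hl).target = (σ.target :: l).getLast (List.cons_ne_nil _ _) := by
  cases l <;> simp [target, append]

lemma append_nEdges : (σ.append l hl).nEdges = σ.nEdges + l.length := by
  have := List.length_pos_of_ne_nil σ.right_ne
  simp only [nEdges, append, List.length_append]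
  omega

end append

lemma IsHalfTrek.append {σ : G.Trek} (h : σ.IsHalfTrek) (l : List V)
    (hl : (σ.target :: l).IsChain fun a b => (a, b) ∈ G.D) : (σ.append l hl).IsHalfTrek := h

lemma source_mem_htr_of_leftTop {v : V} (π : G.Trek) (hv : π.source ≠ v)
    (hs : π.source ∉ G.sib v) (h : π.leftTop = v ∨ π.leftTop ∈ G.sib v ∨ π.leftTop ∈ G.htr v) :
    π.source ∈ G.htr v := by
  obtain ⟨σ, hσs, hσt, hσh, hσn⟩ : ∃ σ : G.Trek, σ.source = v ∧ σ.target = π.leftTop ∧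
      σ.IsHalfTrek ∧ 1 ≤ σ.nEdges + π.left.tail.length := by
    rcases h with h | h | ⟨-, -, σ, hσs, hσt, hσh, hσn⟩
    · have := π.one_le_length_left_tail (h ▸ hv.symm)
      exact ⟨Trek.refl v, rfl, h.symm, rfl, by omega⟩
    · have hB : (v, π.leftTop) ∈ G.B := G.B_symm _ _ (by simpa [sib] using h)
      have := π.one_le_length_left_tail fun he => hs (he ▸ h)
      exact ⟨Trek.ofSib hB, rfl, rfl, rfl, by omega⟩
    · exact ⟨σ, hσs, hσt, hσh, by omega⟩
  have hl : (σ.target :: π.left.tail).IsChain fun a b => (a, b) ∈ G.D := by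
    rw [hσt, leftTop, List.cons_head_tail]
    exact π.left_chain
  refine ⟨hv, hs, σ.append _ hl, hσs, ?_, hσh.append _ hl, ?_⟩
  · simp [append_target, hσt, leftTop, source]
  · rw [append_nEdges]
    exact hσn

end Trek

section TrekSystem

variable {W P : Finset V} {f : V → G.Trek}

lemma NoSidedIntersection.injOn_leftTop (h : G.NoSidedIntersection W f) :
    Set.InjOn (fun y => (f y).leftTop) W := by
  intro y hy y' hy' he
  by_contra hne
  have htop : (f y).leftTop ∈ (f y').leftSet := by
    rw [show (f y).leftTop = (f y').leftTop from he]
    exact (f y').leftTop_mem_leftSet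
  exact Finset.disjoint_left.mp (h y hy y' hy' hne).1 (f y).leftTop_mem_leftSet htop

lemma IsTrekSystem.exists_halfTrekSystem_image_leftTop (hsys : G.IsTrekSystem W P f)
    (hnsi : G.NoSidedIntersection W f) :
    ∃ g : V → G.Trek, (∀ z ∈ W.image fun y => (f y).leftTop, (g z).IsHalfTrek) ∧
      G.IsTrekSystem (W.image fun y => (f y).leftTop) P g ∧
      G.NoSidedIntersection (W.image fun y => (f y).leftTop) g := by
  set t := fun y => (f y).leftTop
  have hinj : Set.InjOn t W := hnsi.injOn_leftTop
  -- `z` itself witnesses the `Nonempty V` that `invFunOn` needs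
  set g := fun z => (f (@Function.invFunOn _ _ ⟨z⟩ t W z)).toHalfTrek
  have hg : ∀ y ∈ W, g (t y) = (f y).toHalfTrek := fun y hy => by
    have : Nonempty V := ⟨y⟩
    simp only [g, hinj.leftInvOn_invFunOn hy]
  obtain ⟨-, himg, hdist⟩ := hsys
  refine ⟨g, ?_, ⟨?_, ?_, ?_⟩, ?_⟩
  · simp only [Finset.forall_mem_image]
    intro y hy
    rw [hg y hy]
    exact (f y).toHalfTrek_isHalfTrek
  · simp only [Finset.forall_mem_image]
    intro y hy
    rw [hg y hy, Trek.toHalfTrek_source]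
  · rw [Finset.image_image, ← himg]
    exact Finset.image_congr fun y hy => by simp [hg y hy]
  · simp only [Finset.forall_mem_image]
    intro y hy y' hy' hne
    rw [hg y hy, hg y' hy', Trek.toHalfTrek_target, Trek.toHalfTrek_target]
    exact hdist y hy y' hy' fun he => hne (he ▸ rfl)
  · simp only [NoSidedIntersection, Finset.forall_mem_image]
    intro y hy y' hy' hne
    rw [hg y hy, hg y' hy', Trek.toHalfTrek_leftSet, Trek.toHalfTrek_leftSet,
      Trek.toHalfTrek_rightSet, Trek.toHalfTrek_rightSet, Finset.disjoint_singleton]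
    exact ⟨hne, (hnsi y hy y' hy' fun he => hne (he ▸ rfl)).2⟩

end TrekSystem

end MixedGraph

/-- If `W` satisfies the weak half-trek criterion with respect to `v`, then there is a set
`Y` satisfying the half-trek criterion with respect to `v` with `Y ∩ htr(v) = W ∩ htr(v)`. -/
theorem weak_htc_to_htc {V : Type*} [Fintype V] [DecidableEq V] (G : MixedGraph V)
    (v : V) (W : Finset V) (hW : G.SatisfiesWeakHTC v W) :
    ∃ Y : Finset V, G.SatisfiesHTC v Y ∧ (↑Y ∩ G.htr v : Set V) = ↑W ∩ G.htr v := by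
  obtain ⟨hcard, havoid, f, hhalf, hsys, hnsi⟩ := hW
  have hfix : ∀ y ∈ W, y ∈ G.htr v → (f y).leftTop = y := fun y hy hyh =>
    (hhalf y hy hyh).leftTop_eq_source.trans (hsys.1 y hy)
  have hmoved : ∀ y ∈ W, y ∉ G.htr v →
      (f y).leftTop ≠ v ∧ (f y).leftTop ∉ G.sib v ∧ (f y).leftTop ∉ G.htr v := by
    intro y hy hyh
    obtain ⟨hv, hs⟩ := havoid y hy
    rw [← hsys.1 y hy] at hyh hv hs
    have := mt ((f y).source_mem_htr_of_leftTop hv hs) hyh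
    tauto
  obtain ⟨g, hghalf, hgsys, hgnsi⟩ := hsys.exists_halfTrekSystem_image_leftTop hnsi
  refine ⟨W.image fun y => (f y).leftTop, ⟨?_, ?_, g, hghalf, hgsys, hgnsi⟩, ?_⟩
  · rw [Finset.card_image_of_injOn hnsi.injOn_leftTop, hcard]
  · simp only [Finset.forall_mem_image]
    intro y hy
    by_cases hyh : y ∈ G.htr v
    · rw [hfix y hy hyh]
      exact havoid y hy
    · exact ⟨(hmoved y hy hyh).1, (hmoved y hy hyh).2.1⟩
  · ext x
    simp only [Set.mem_inter_iff, Finset.coe_image, Set.mem_image, Finset.mem_coe]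
    constructor
    · rintro ⟨⟨y, hy, rfl⟩, hxh⟩
      by_cases hyh : y ∈ G.htr v
      · rw [hfix y hy hyh] at hxh ⊢
        exact ⟨hy, hxh⟩
      · exact absurd hxh (hmoved y hy hyh).2.2
    · rintro ⟨hx, hxh⟩
      exact ⟨⟨x, hx, hfix x hx hxh⟩, hxh⟩
end

section
/- Let G=(V,D,B) be a mixed graph. Define S_0={v∈V : pa(v)=∅} and, recursively, S_{k+1}=S_k ∪ {v∈V : there exists Y ⊆ (S_k ∪ (V∖htr(v))) ∖ ({v}∪sib(v)) satisfying the half-trek criterion with respect to v}. Then G is HTC-identifiable if and only if S_k=V for some k (equivalently, the least fixed point of this monotone iteration equals V). -/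
open scoped Classical Matrix

namespace MixedGraph

variable {V : Type*} [Fintype V] [DecidableEq V]

/-- The sets computed by the algorithm for testing HTC-identifiability: `S 0` consists of
the nodes without parents, and `S (k+1)` adds all nodes `v` for which some set of allowed
nodes `Y ⊆ (S k ∪ (V ∖ htr(v))) ∖ ({v} ∪ sib(v))` satisfies the half-trek criterion with
respect to `v`. -/
def algSet (G : MixedGraph V) : ℕ → Set V
  | 0 => {v | G.pa v = ∅}
  | k + 1 => G.algSet k ∪
      {v | ∃ Y : Finset V,
        ↑Y ⊆ (G.algSet k ∪ (G.htr v)ᶜ) \ ({v} ∪ (↑(G.sib v) : Set V)) ∧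
        G.SatisfiesHTC v Y}

end MixedGraph

/-!
Both directions compare the iteration with a ranking of the nodes. If `(Y_v)` and `≺` witness
HTC-identifiability, well-founded induction along `≺` shows that every node enters some `S_k`:
the nodes of `Y_v ∩ htr(v)` precede `v`, so they all lie in a common `S_k`, and then `v ∈ S_{k+1}`.
Conversely, if every node enters the iteration, rank each node by the first stage containing it;
the set `Y_v` that admitted `v` has all its half-trek reachable nodes of strictly smaller rank,
so any strict total order refining the rank works.
-/

theorem exists_isStrictTotalOrder_of_lt_comp {α β : Type*} [LinearOrder β] (n : α → β) :
    ∃ r : α → α → Prop, IsStrictTotalOrder α r ∧ ∀ a b, n a < n b → r a b := by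
  let f : α → β ×ₗ Cardinal := fun a => toLex (n a, embeddingToCardinal a)
  have hf : Function.Injective f := fun a b h =>
    embeddingToCardinal.injective (Prod.ext_iff.1 (toLex.injective h)).2
  let _ : LinearOrder α := LinearOrder.lift' f hf
  exact ⟨(· < ·), inferInstance, fun a b h => Prod.Lex.toLex_lt_toLex.2 (Or.inl h)⟩

namespace MixedGraph

variable {V : Type*} [Fintype V] [DecidableEq V] (G : MixedGraph V)

theorem algSet_mono : Monotone G.algSet :=
  monotone_nat_of_le_succ fun _ _ hv => Or.inl hv

theorem exists_subset_algSet {s : Set V} (h : ∀ w ∈ s, ∃ k, w ∈ G.algSet k) :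
    ∃ k, s ⊆ G.algSet k := by
  choose k hk using h
  obtain ⟨K, hK⟩ := Finite.exists_le fun w : s => k w w.2
  exact ⟨K, fun w hw => G.algSet_mono (hK ⟨w, hw⟩) (hk w hw)⟩

theorem exists_algSet_eq_univ_iff :
    (∃ k, G.algSet k = Set.univ) ↔ ∀ v, ∃ k, v ∈ G.algSet k := by
  refine ⟨fun ⟨k, hk⟩ v => ⟨k, hk ▸ Set.mem_univ v⟩, fun h => ?_⟩
  obtain ⟨k, hk⟩ := G.exists_subset_algSet (s := Set.univ) fun v _ => h v
  exact ⟨k, Set.univ_subset_iff.1 hk⟩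

def Trek.single_s9 (v : V) : G.Trek where
  left := [v]
  right := [v]
  left_ne := List.cons_ne_nil _ _
  right_ne := List.cons_ne_nil _ _
  hasBidir := false
  left_chain := List.isChain_singleton _
  right_chain := List.isChain_singleton _
  head_cond := rfl

theorem satisfiesHTC_empty {v : V} (h : G.pa v = ∅) : G.SatisfiesHTC v ∅ :=
  ⟨by simp [h], by simp, Trek.single_s9 G, by simp, ⟨by simp, by simp [h], by simp⟩,
    by simp [NoSidedIntersection]⟩

theorem mem_algSet_succ {v : V} {Y : Finset V} {k : ℕ} (hY : G.SatisfiesHTC v Y)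
    (hk : ∀ w ∈ Y, w ∈ G.htr v → w ∈ G.algSet k) : v ∈ G.algSet (k + 1) := by
  refine Or.inr ⟨Y, fun w hw => ⟨?_, ?_⟩, hY⟩
  · by_cases hwv : w ∈ G.htr v
    exacts [Or.inl (hk w hw hwv), Or.inr hwv]
  · have := (hY.2.1 w hw)
    rintro (h | h)
    exacts [this.1 h, this.2 (Finset.mem_coe.1 h)]

theorem exists_satisfiesHTC_of_mem_algSet {v : V} {k : ℕ} (hv : v ∈ G.algSet k) :
    ∃ Y, G.SatisfiesHTC v Y ∧ ∀ w ∈ Y, w ∈ G.htr v → ∃ j < k, w ∈ G.algSet j := by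
  induction k with
  | zero => exact ⟨∅, G.satisfiesHTC_empty hv, by simp⟩
  | succ k ih =>
    rcases hv with hv | ⟨Y, hYsub, hY⟩
    · obtain ⟨Y, hY, hlt⟩ := ih hv
      exact ⟨Y, hY, fun w hw hwv =>
        let ⟨j, hj, hwj⟩ := hlt w hw hwv; ⟨j, hj.trans k.lt_succ_self, hwj⟩⟩
    · refine ⟨Y, hY, fun w hw hwv => ⟨k, k.lt_succ_self, ?_⟩⟩
      exact ((hYsub hw).1.resolve_right (not_not.2 hwv))

end MixedGraph

/-- `G` is HTC-identifiable if and only if the monotone iteration reaches all of `V`. -/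
theorem htc_identifiable_iff_algorithm {V : Type*} [Fintype V] [DecidableEq V]
    (G : MixedGraph V) :
    G.HTCIdentifiable ↔ ∃ k : ℕ, G.algSet k = Set.univ := by
  rw [G.exists_algSet_eq_univ_iff]
  constructor
  · rintro ⟨Y, hY, r, hr, hord⟩ v
    induction v using (Finite.wellFounded_of_trans_of_irrefl r).induction with
    | _ v ih =>
      obtain ⟨k, hk⟩ := G.exists_subset_algSet (s := {w | w ∈ Y v ∧ w ∈ G.htr v})
        fun w hw => ih w (hord v w hw.1 hw.2)
      exact ⟨k + 1, G.mem_algSet_succ (hY v) fun w hw hwv => hk ⟨hw, hwv⟩⟩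
  · intro hex
    let rank v := Nat.find (hex v)
    have hrank : ∀ v, ∃ Y, G.SatisfiesHTC v Y ∧ ∀ w ∈ Y, w ∈ G.htr v → rank w < rank v := by
      intro v
      obtain ⟨Y, hY, hlt⟩ := G.exists_satisfiesHTC_of_mem_algSet (Nat.find_spec (hex v))
      exact ⟨Y, hY, fun w hw hwv =>
        let ⟨j, hj, hwj⟩ := hlt w hw hwv; (Nat.find_min' (hex w) hwj).trans_lt hj⟩
    choose Y hY hlt using hrank
    obtain ⟨r, hr, hrank_lt⟩ := exists_isStrictTotalOrder_of_lt_comp rank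
    exact ⟨Y, hY, r, hr, fun v w hw hwv => hrank_lt w v (hlt v w hw hwv)⟩
end
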